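/- Let f : [0, ∞) → ℝ be continuous and set F(x) = ∫₀ˣ f(s) ds. Assume (ii) lim_{x→+∞} F(x)/x² = +∞, and (iii) there exist τ > 0 and β₀ > 0 such that liminf_{x→+∞} (f(x)·x − 2·F(x))/x^τ ≥ β₀. Then lim_{x→+∞} f(x)/x = +∞. -/
import Mathlib


/-- Let `f` be continuous on `[0, ∞)` and `F(x) = ∫₀ˣ f(s) ds`.
If `F(x)/x² → +∞` as `x → +∞` and there are `τ > 0`, `β₀ > 0` with
`liminf_{x→+∞} (f(x)·x − 2·F(x))/x^τ ≥ β₀`, then `f(x)/x → +∞` as `x → +∞`. -/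
theorem stmt_4 (f F : ℝ → ℝ) (hf : ContinuousOn f (Set.Ici (0 : ℝ)))
    (hF : ∀ x : ℝ, F x = ∫ s in (0 : ℝ)..x, f s)
    (hii : Filter.Tendsto (fun x => F x / x ^ 2) Filter.atTop Filter.atTop)
    (τ β₀ : ℝ) (hτ : 0 < τ) (hβ₀ : 0 < β₀)
    (hiii : β₀ ≤ Filter.liminf (fun x => (f x * x - 2 * F x) / x ^ τ) Filter.atTop) :
    Filter.Tendsto (fun x => f x / x) Filter.atTop Filter.atTop := by
  set u : ℝ → ℝ := fun x => (f x * x - 2 * F x) / x ^ τ with hu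
  set S : Set ℝ := {a | ∀ᶠ x in Filter.atTop, a ≤ u x} with hSdef
  have hS : β₀ ≤ sSup S := by
    rwa [Filter.liminf_eq] at hiii
  have hSne : S.Nonempty := by
    by_contra h
    rw [Set.not_nonempty_iff_eq_empty] at h
    rw [h, Real.sSup_empty] at hS
    linarith
  -- find a > 0 with eventually a ≤ u x
  have key : ∃ a > 0, ∀ᶠ x in Filter.atTop, a ≤ u x := by
    by_cases hbdd : BddAbove S
    · have h2 : β₀ / 2 < sSup S := lt_of_lt_of_le (by linarith) hS
      obtain ⟨a, haS, ha⟩ := exists_lt_of_lt_csSup hSne h2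
      exact ⟨a, by linarith, haS⟩
    · rw [not_bddAbove_iff] at hbdd
      obtain ⟨a, haS, ha⟩ := hbdd 0
      exact ⟨a, ha, haS⟩
  obtain ⟨a, ha, hev⟩ := key
  have hmono : ∀ᶠ x in Filter.atTop, 2 * (F x / x ^ 2) ≤ f x / x := by
    filter_upwards [hev, Filter.eventually_gt_atTop 0] with x hx hx0
    have hxτ : (0 : ℝ) < x ^ τ := Real.rpow_pos_of_pos hx0 τ
    have hnum : 0 ≤ f x * x - 2 * F x := by
      have h0 : 0 ≤ u x := le_trans ha.le hx
      rw [hu] at h0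
      simp only at h0
      nlinarith [mul_nonneg h0 hxτ.le, div_mul_cancel₀ (f x * x - 2 * F x) hxτ.ne']
    have hx2 : (0 : ℝ) < x ^ 2 := by positivity
    have heq : 2 * (F x / x ^ 2) = (2 * F x) / x ^ 2 := by ring
    rw [heq, div_le_div_iff₀ hx2 hx0]
    nlinarith
  have h2 : Filter.Tendsto (fun x => 2 * (F x / x ^ 2)) Filter.atTop Filter.atTop :=
    hii.const_mul_atTop two_pos
  exact Filter.tendsto_atTop_mono' _ hmono h2
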